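/- arXiv:1201.0700 — 2 statements merged into one kernel-verified Lean document; each statement's English description precedes it below -/
import Mathlib

section
/- Let φ: X → Y be a factor code with X a sofic shift. Then the set S(φ) of entropies of intermediate subshifts arising from decompositions of φ into factor codes is countable. -/
open Set Function Filter Topology

/-- The left shift map on bi-infinite sequences. -/
def shiftMap (A : Type*) : (ℤ → A) → (ℤ → A) := fun x i => x (i + 1)

/-- The product topology on `ℤ → A` where `A` carries the discrete topology. -/
def shiftTop (A : Type*) : TopologicalSpace (ℤ → A) :=
  @Pi.topologicalSpace ℤ (fun _ => A) (fun _ => ⊥)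

/-- A shift space: a closed, shift-invariant subset of the full shift. -/
def IsShiftSpace {A : Type*} (X : Set (ℤ → A)) : Prop :=
  @IsClosed _ (shiftTop A) X ∧ shiftMap A '' X = X

/-- The word `w` occurs in `x` at position `i`. -/
def OccursAt {A : Type*} (x : ℤ → A) (i : ℤ) (w : List A) : Prop :=
  ∀ j : Fin w.length, x (i + (j : ℕ)) = w.get j

/-- The word `w` belongs to the language of `X`. -/
def InLang {A : Type*} (X : Set (ℤ → A)) (w : List A) : Prop :=
  ∃ x ∈ X, OccursAt x 0 w

/-- Topological entropy of a shift space, `h(X) = lim (1/n) log |B_n(X)|`,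
which by subadditivity equals the infimum. -/
noncomputable def entropy {A : Type*} (X : Set (ℤ → A)) : ℝ :=
  ⨅ n : ℕ, Real.log (Set.ncard {w : List A | w.length = n + 1 ∧ InLang X w}) / (n + 1 : ℝ)

/-- A shift of finite type: defined by a finite set of forbidden words. -/
def IsSFT {A : Type*} (X : Set (ℤ → A)) : Prop :=
  ∃ F : Finset (List A), X = {x | ∀ i : ℤ, ∀ w ∈ F, ¬ OccursAt x i w}

/-- A factor code: a continuous, shift-commuting surjection from `X` onto `Y`. -/
def IsFactorCode {A B : Type*} (X : Set (ℤ → A)) (Y : Set (ℤ → B))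
    (f : (ℤ → A) → (ℤ → B)) : Prop :=
  @ContinuousOn _ _ (shiftTop A) (shiftTop B) f X ∧ Set.MapsTo f X Y ∧
    Set.SurjOn f X Y ∧ ∀ x ∈ X, f (shiftMap A x) = shiftMap B (f x)

/-- An embedding: a continuous, shift-commuting injection from `X` into `Y`. -/
def IsEmbeddingCode {A B : Type*} (X : Set (ℤ → A)) (Y : Set (ℤ → B))
    (f : (ℤ → A) → (ℤ → B)) : Prop :=
  @ContinuousOn _ _ (shiftTop A) (shiftTop B) f X ∧ Set.MapsTo f X Y ∧
    Set.InjOn f X ∧ ∀ x ∈ X, f (shiftMap A x) = shiftMap B (f x)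

/-- A sofic shift: the image of a shift of finite type under a factor code. -/
def IsSofic {A : Type*} (X : Set (ℤ → A)) : Prop :=
  ∃ (B : Type) (_ : Fintype B) (W : Set (ℤ → B)) (f : (ℤ → B) → (ℤ → A)),
    IsSFT W ∧ IsFactorCode W X f

/-- A mixing shift space. -/
def IsMixingShift {A : Type*} (X : Set (ℤ → A)) : Prop :=
  ∀ u v : List A, InLang X u → InLang X v →
    ∃ N : ℕ, ∀ n ≥ N, ∃ w : List A, w.length = n ∧ InLang X (u ++ w ++ v)

/-- An irreducible shift space. -/
def IsIrreducibleShift {A : Type*} (X : Set (ℤ → A)) : Prop :=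
  ∀ u v : List A, InLang X u → InLang X v → ∃ w : List A, InLang X (u ++ w ++ v)

/-- A nonwandering shift space. -/
def IsNonwanderingShift {A : Type*} (X : Set (ℤ → A)) : Prop :=
  ∀ u : List A, InLang X u → ∃ w : List A, InLang X (u ++ w ++ u)

/-- A coded system: contains an increasing sequence of irreducible SFTs whose
union is dense in it. -/
def IsCodedSystem {A : Type*} (X : Set (ℤ → A)) : Prop :=
  ∃ W : ℕ → Set (ℤ → A), Monotone W ∧
    (∀ n, IsSFT (W n) ∧ IsIrreducibleShift (W n) ∧ W n ⊆ X) ∧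
    @closure _ (shiftTop A) (⋃ n, W n) = X

/-- A Perron number: a real algebraic integer `≥ 1` strictly dominating in
absolute value all of its other algebraic conjugates. -/
def IsPerron (l : ℝ) : Prop :=
  1 ≤ l ∧ IsIntegral ℤ l ∧
    ∀ z : ℂ, Polynomial.aeval z (minpoly ℤ l) = 0 → z ≠ (l : ℂ) → ‖z‖ < l

/-- A weak Perron number: a real `λ ≥ 1` such that `λ^p` is Perron for some `p ≥ 1`. -/
def IsWeakPerron (l : ℝ) : Prop :=
  1 ≤ l ∧ ∃ p : ℕ, 0 < p ∧ IsPerron (l ^ p)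

/-- `P = { h ≥ 0 : e^h is a Perron number }`. -/
def PerronSet : Set ℝ := {h : ℝ | 0 ≤ h ∧ IsPerron (Real.exp h)}

/-- `P^w = { h ≥ 0 : e^h is a weak Perron number }`. -/
def WeakPerronSet : Set ℝ := {h : ℝ | 0 ≤ h ∧ IsWeakPerron (Real.exp h)}

/-- `S(φ)`: entropies of intermediate subshifts in decompositions of the factor
code `φ` into factor codes. -/
def FactorDecompEntropies {A B : Type*} (X : Set (ℤ → A)) (Y : Set (ℤ → B))
    (φ : (ℤ → A) → (ℤ → B)) : Set ℝ :=
  {r | ∃ (C : Type) (_ : Fintype C) (Z : Set (ℤ → C))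
        (φ1 : (ℤ → A) → (ℤ → C)) (φ2 : (ℤ → C) → (ℤ → B)),
      IsShiftSpace Z ∧ IsFactorCode X Z φ1 ∧ IsFactorCode Z Y φ2 ∧
      (∀ x ∈ X, φ x = φ2 (φ1 x)) ∧ r = entropy Z}

/-- `S_0(φ)`: entropies of intermediate SFTs in decompositions of the factor
code `φ` into factor codes. -/
def FactorDecompEntropiesSFT {A B : Type*} (X : Set (ℤ → A)) (Y : Set (ℤ → B))
    (φ : (ℤ → A) → (ℤ → B)) : Set ℝ :=
  {r | ∃ (C : Type) (_ : Fintype C) (Z : Set (ℤ → C))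
        (φ1 : (ℤ → A) → (ℤ → C)) (φ2 : (ℤ → C) → (ℤ → B)),
      IsShiftSpace Z ∧ IsSFT Z ∧ IsFactorCode X Z φ1 ∧ IsFactorCode Z Y φ2 ∧
      (∀ x ∈ X, φ x = φ2 (φ1 x)) ∧ r = entropy Z}

/-- `T(φ)`: entropies of irreducible intermediate shift spaces in decompositions
of the embedding `φ` into embeddings. -/
def EmbedDecompEntropies {A B : Type*} (X : Set (ℤ → A)) (Y : Set (ℤ → B))
    (φ : (ℤ → A) → (ℤ → B)) : Set ℝ :=
  {r | ∃ (C : Type) (_ : Fintype C) (Z : Set (ℤ → C))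
        (φ1 : (ℤ → A) → (ℤ → C)) (φ2 : (ℤ → C) → (ℤ → B)),
      IsShiftSpace Z ∧ IsIrreducibleShift Z ∧
      IsEmbeddingCode X Z φ1 ∧ IsEmbeddingCode Z Y φ2 ∧
      (∀ x ∈ X, φ x = φ2 (φ1 x)) ∧ r = entropy Z}

/-- `T_0(φ)`: as `T(φ)` but requiring the intermediate shift to be of finite type. -/
def EmbedDecompEntropiesSFT {A B : Type*} (X : Set (ℤ → A)) (Y : Set (ℤ → B))
    (φ : (ℤ → A) → (ℤ → B)) : Set ℝ :=
  {r | ∃ (C : Type) (_ : Fintype C) (Z : Set (ℤ → C))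
        (φ1 : (ℤ → A) → (ℤ → C)) (φ2 : (ℤ → C) → (ℤ → B)),
      IsShiftSpace Z ∧ IsIrreducibleShift Z ∧ IsSFT Z ∧
      IsEmbeddingCode X Z φ1 ∧ IsEmbeddingCode Z Y φ2 ∧
      (∀ x ∈ X, φ x = φ2 (φ1 x)) ∧ r = entropy Z}

/-- `T_1(φ)`: as `T(φ)` but requiring the intermediate shift to be sofic. -/
def EmbedDecompEntropiesSofic {A B : Type*} (X : Set (ℤ → A)) (Y : Set (ℤ → B))
    (φ : (ℤ → A) → (ℤ → B)) : Set ℝ :=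
  {r | ∃ (C : Type) (_ : Fintype C) (Z : Set (ℤ → C))
        (φ1 : (ℤ → A) → (ℤ → C)) (φ2 : (ℤ → C) → (ℤ → B)),
      IsShiftSpace Z ∧ IsIrreducibleShift Z ∧ IsSofic Z ∧
      IsEmbeddingCode X Z φ1 ∧ IsEmbeddingCode Z Y φ2 ∧
      (∀ x ∈ X, φ x = φ2 (φ1 x)) ∧ r = entropy Z}

/-- The set of least periods of periodic points of `X`. -/
def leastPeriods {A : Type*} (X : Set (ℤ → A)) : Set ℕ :=
  {k : ℕ | 0 < k ∧ ∃ x ∈ X, Function.minimalPeriod (shiftMap A) x = k}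

/-- `p` is the period of `X`: the gcd of the least periods of its periodic points. -/
def HasShiftPeriod {A : Type*} (X : Set (ℤ → A)) (p : ℕ) : Prop :=
  (∀ k ∈ leastPeriods X, p ∣ k) ∧ ∀ d : ℕ, (∀ k ∈ leastPeriods X, d ∣ k) → d ∣ p

/-- `q_k(X)`: the number of points of `X` of least period exactly `k`. -/
noncomputable def qk {A : Type*} (X : Set (ℤ → A)) (k : ℕ) : ℕ :=
  Set.ncard {x ∈ X | Function.minimalPeriod (shiftMap A) x = k}

/-! By Curtis–Hedlund–Lyndon, a factor code `f` out of the compact shift space `X` is a sliding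
block code: `f x = Φ ∘ x^[I]`, where `x^[I] i = (x (j + i))_{j ∈ I}` is the higher block
presentation for a finite window `I` and `Φ` is a block map into the alphabet of the factor.
Entropy only counts words, and a letter map that is injective on the letters in use does not
change word counts. Replacing `Φ` by a normal form `ρ` with values in the finite alphabet
`A^I` itself and `Φ` injective on the range of `ρ`, we get `h(f(X)) = h(ρ(X^[I]))`: one of
countably many numbers, indexed by the windows `I` and the self-maps `ρ` of `A^I`. -/

section Translate

open scoped translate

variable {A B : Type*}

lemma shiftMap_injective : Injective (shiftMap A) := fun x y h =>
  funext fun m => by simpa [shiftMap] using congrFun h (m - 1)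

lemma shiftMap_translate (i : ℤ) (x : ℤ → A) : shiftMap A (τ i x) = τ (i - 1) x :=
  funext fun m => congrArg x (by ring)

namespace IsShiftSpace

variable {X : Set (ℤ → A)}

lemma translate_mem (hX : IsShiftSpace X) {x : ℤ → A} (hx : x ∈ X) (i : ℤ) : τ i x ∈ X := by
  refine Int.induction_on i (by rwa [translate_zero]) (fun i hi => ?_) (fun i hi => ?_)
  · rw [← hX.2] at hi
    obtain ⟨y, hy, hyx⟩ := hi
    obtain rfl : y = τ ((i : ℤ) + 1) x :=
      shiftMap_injective (hyx.trans (by rw [shiftMap_translate, add_sub_cancel_right]))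
    exact hy
  · rw [← shiftMap_translate, ← hX.2]
    exact mem_image_of_mem _ hi

lemma map_translate (hX : IsShiftSpace X) {f : (ℤ → A) → (ℤ → B)}
    (hf : ∀ x ∈ X, f (shiftMap A x) = shiftMap B (f x)) {x : ℤ → A} (hx : x ∈ X) (i : ℤ) :
    f (τ i x) = τ i (f x) := by
  refine Int.induction_on i (by rw [translate_zero, translate_zero]) (fun i hi => ?_)
    (fun i hi => ?_)
  · apply shiftMap_injective
    rw [← hf _ (hX.translate_mem hx _), shiftMap_translate, shiftMap_translate,
      add_sub_cancel_right, hi]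
  · rw [← shiftMap_translate, hf _ (hX.translate_mem hx _), hi, shiftMap_translate]

end IsShiftSpace

end Translate

section Locality

variable {ι A C : Type*} [TopologicalSpace A] [TopologicalSpace C] [DiscreteTopology C]
  {X : Set (ι → A)} {g : (ι → A) → C}

lemma ContinuousWithinAt.exists_finset_eqOn {x : ι → A} (hg : ContinuousWithinAt g X x) :
    ∃ I : Finset ι, ∀ y ∈ X, EqOn y x I → g y = g x := by
  obtain ⟨u, hu, hux⟩ := mem_nhdsWithin_iff_exists_mem_nhds_inter.1
    (hg.preimage_mem_nhdsWithin ((isOpen_discrete {g x}).mem_nhds rfl))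
  rw [nhds_pi, Filter.mem_pi'] at hu
  obtain ⟨I, t, ht, hIt⟩ := hu
  refine ⟨I, fun y hy hyx => hux ⟨hIt fun i hi => ?_, hy⟩⟩
  rw [hyx hi]
  exact mem_of_mem_nhds (ht i)

lemma IsCompact.exists_finset_eqOn [DiscreteTopology A] (hX : IsCompact X)
    (hg : ContinuousOn g X) :
    ∃ I : Finset ι, ∀ x ∈ X, ∀ y ∈ X, EqOn x y I → g x = g y := by
  classical
  let U : Finset ι → Set (ι → A) := fun I =>
    {x | ∀ y ∈ X, ∀ z ∈ X, EqOn y x I → EqOn z x I → g y = g z}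
  have hU_open : ∀ I, IsOpen (U I) := fun I => isOpen_iff_mem_nhds.2 fun x hx => by
    filter_upwards [set_pi_mem_nhds I.finite_toSet fun i _ =>
      (isOpen_discrete {x i}).mem_nhds rfl] with x' hx' y hy z hz hyx' hzx'
    exact hx y hy z hz (fun i hi => (hyx' hi).trans (hx' i hi))
      (fun i hi => (hzx' hi).trans (hx' i hi))
  have hU_mono : Monotone U := fun I J hIJ x hx y hy z hz hyx hzx =>
    hx y hy z hz (hyx.mono hIJ) (hzx.mono hIJ)
  have hX_cover : X ⊆ ⋃ I, U I := fun x hx => by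
    obtain ⟨I, hI⟩ := (hg x hx).exists_finset_eqOn
    exact mem_iUnion.2 ⟨I, fun y hy z hz hyx hzx => (hI y hy hyx).trans (hI z hz hzx).symm⟩
  obtain ⟨I, hI⟩ := hX.elim_directed_cover U hU_open hX_cover hU_mono.directed_le
  exact ⟨I, fun x hx y hy hxy => hI hx x hx y hy (eqOn_refl _ _) hxy.symm⟩

lemma IsCompact.exists_finset_restrict_factorization [DiscreteTopology A] [Nonempty C]
    (hX : IsCompact X) (hg : ContinuousOn g X) :
    ∃ (I : Finset ι) (Φ : (I → A) → C), ∀ x ∈ X, g x = Φ (I.restrict x) := by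
  obtain ⟨I, hI⟩ := hX.exists_finset_eqOn hg
  have hfac : FactorsThrough (fun x : X => g x) (fun x : X => I.restrict (x : ι → A)) :=
    fun x y hxy => hI x x.2 y y.2 fun i hi => congrFun hxy ⟨i, hi⟩
  exact ⟨I, extend _ _ fun _ => Classical.arbitrary C,
    fun x hx => (hfac.extend_apply _ ⟨x, hx⟩).symm⟩

end Locality

section Entropy

variable {A D : Type*}

/-- `B_n(X)`. -/
def blocks (X : Set (ℤ → A)) (n : ℕ) : Set (List A) := {w | w.length = n ∧ InLang X w}

lemma blocks_eq_image (X : Set (ℤ → A)) (n : ℕ) :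
    blocks X n = (fun x => List.ofFn fun j : Fin n => x (j : ℕ)) '' X := by
  ext w
  constructor
  · rintro ⟨rfl, x, hx, hxw⟩
    exact ⟨x, hx, (congrArg List.ofFn (funext fun j => by simpa using hxw j)).trans w.ofFn_get⟩
  · rintro ⟨x, hx, rfl⟩
    exact ⟨List.length_ofFn, x, hx, fun j => by simp⟩

lemma entropy_eq_of_ncard_blocks_eq {X : Set (ℤ → A)} {Y : Set (ℤ → D)}
    (h : ∀ n, (blocks X n).ncard = (blocks Y n).ncard) : entropy X = entropy Y :=
  iInf_congr fun n => by rw [← blocks, ← blocks, h]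

lemma blocks_image_comp (Φ : D → A) (W : Set (ℤ → D)) (n : ℕ) :
    blocks ((Φ ∘ ·) '' W) n = List.map Φ '' blocks W n := by
  simp only [blocks_eq_image, image_image, List.map_ofFn]
  rfl

lemma injOn_map_blocks {Φ : D → A} {W : Set (ℤ → D)} {S : Set D} (hW : ∀ z ∈ W, ∀ i, z i ∈ S)
    (hΦ : InjOn Φ S) (n : ℕ) : InjOn (List.map Φ) (blocks W n) := by
  rw [blocks_eq_image]
  rintro _ ⟨x, hx, rfl⟩ _ ⟨y, hy, rfl⟩ hxy
  simp only [List.map_ofFn] at hxy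
  exact congrArg List.ofFn
    (funext fun j => hΦ (hW x hx _) (hW y hy _) (congrFun (List.ofFn_injective hxy) j))

lemma entropy_image_comp_of_injOn {Φ : D → A} {W : Set (ℤ → D)} {S : Set D}
    (hW : ∀ z ∈ W, ∀ i, z i ∈ S) (hΦ : InjOn Φ S) : entropy ((Φ ∘ ·) '' W) = entropy W :=
  entropy_eq_of_ncard_blocks_eq fun n => by
    rw [blocks_image_comp, (injOn_map_blocks hW hΦ n).ncard_image]

end Entropy

section BlockCodes

open scoped translate

variable {A C : Type*}

/-- The higher block presentation `x^[I]`. -/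
def blockMap (I : Finset ℤ) (x : ℤ → A) : ℤ → (I → A) := fun i => I.restrict (τ (-i) x)

lemma IsFactorCode.exists_blockMap_factorization [Finite A] [Nonempty C] {X : Set (ℤ → A)}
    {Z : Set (ℤ → C)} {f : (ℤ → A) → (ℤ → C)} (hX : IsShiftSpace X) (hf : IsFactorCode X Z f) :
    ∃ (I : Finset ℤ) (Φ : (I → A) → C), ∀ x ∈ X, f x = Φ ∘ blockMap I x := by
  let : TopologicalSpace A := ⊥
  let : TopologicalSpace C := ⊥
  have : DiscreteTopology A := ⟨rfl⟩
  have : DiscreteTopology C := ⟨rfl⟩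
  have hX_compact : IsCompact X := IsClosed.isCompact hX.1
  obtain ⟨I, Φ, hΦ⟩ := hX_compact.exists_finset_restrict_factorization
    ((continuous_apply 0).comp_continuousOn hf.1)
  refine ⟨I, Φ, fun x hx => funext fun i => ?_⟩
  calc f x i = f (τ (-i) x) 0 := by
        rw [hX.map_translate hf.2.2.2 hx, translate_apply, zero_sub, neg_neg]
    _ = Φ (blockMap I x i) := hΦ _ (hX.translate_mem hx (-i))

lemma exists_comp_eq_self_injOn_range {α β : Type*} [Nonempty α] (Φ : α → β) :
    ∃ ρ : α → α, Φ ∘ ρ = Φ ∧ InjOn Φ (range ρ) := by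
  refine ⟨invFun Φ ∘ Φ, funext fun a => invFun_eq ⟨a, rfl⟩, ?_⟩
  rintro _ ⟨a, rfl⟩ _ ⟨b, rfl⟩ hab
  simp only [comp_apply, invFun_eq ⟨_, rfl⟩] at hab ⊢
  rw [hab]

def blockCodeEntropies (X : Set (ℤ → A)) : Set ℝ :=
  ⋃ I : Finset ℤ, range fun ρ : (I → A) → (I → A) => entropy ((ρ ∘ ·) '' (blockMap I '' X))

lemma blockCodeEntropies_countable [Finite A] (X : Set (ℤ → A)) :
    (blockCodeEntropies X).Countable :=
  countable_iUnion fun _ => countable_range _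

lemma IsFactorCode.entropy_mem_blockCodeEntropies [Finite A] {X : Set (ℤ → A)}
    {Z : Set (ℤ → C)} {f : (ℤ → A) → (ℤ → C)} (hX : IsShiftSpace X) (hf : IsFactorCode X Z f) :
    entropy Z ∈ blockCodeEntropies X := by
  rcases X.eq_empty_or_nonempty with rfl | ⟨x₀, hx₀⟩
  · have hZ : Z = ∅ := subset_empty_iff.1 (image_empty f ▸ hf.2.2.1)
    refine mem_iUnion.2 ⟨∅, id, entropy_eq_of_ncard_blocks_eq fun n => ?_⟩
    simp [hZ, blocks, InLang]
  have : Nonempty A := ⟨x₀ 0⟩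
  have : Nonempty C := ⟨f x₀ 0⟩
  obtain ⟨I, Φ, hΦ⟩ := hf.exists_blockMap_factorization hX
  obtain ⟨ρ, hΦρ, hΦ_inj⟩ := exists_comp_eq_self_injOn_range Φ
  have hZ : Z = (Φ ∘ ·) '' ((ρ ∘ ·) '' (blockMap I '' X)) := by
    rw [image_image, image_image, ← hf.2.2.1.image_eq_of_mapsTo hf.2.1]
    exact image_congr fun x hx => by rw [← comp_assoc, hΦρ, hΦ x hx]
  refine mem_iUnion.2 ⟨I, ρ, ?_⟩
  rw [hZ, entropy_image_comp_of_injOn (by rintro _ ⟨_, -, rfl⟩ i; exact mem_range_self _) hΦ_inj]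

end BlockCodes

theorem factorDecompEntropies_countable_of_sofic_general {A B : Type*} [Fintype A]
    (X : Set (ℤ → A)) (Y : Set (ℤ → B)) (φ : (ℤ → A) → (ℤ → B))
    (hX : IsShiftSpace X) :
    (FactorDecompEntropies X Y φ).Countable := by
  refine (blockCodeEntropies_countable X).mono ?_
  rintro _ ⟨C, _, Z, φ1, -, -, hφ1, -, -, rfl⟩
  exact hφ1.entropy_mem_blockCodeEntropies hX

/-- If `φ : X → Y` is a factor code with `X` sofic, then
`S(φ)` is countable. -/
theorem factorDecompEntropies_countable_of_sofic {A B : Type*} [Fintype A] [Fintype B]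
    (X : Set (ℤ → A)) (Y : Set (ℤ → B)) (φ : (ℤ → A) → (ℤ → B))
    (hX : IsShiftSpace X) (hXsofic : IsSofic X) (hY : IsShiftSpace Y)
    (hφ : IsFactorCode X Y φ) :
    (FactorDecompEntropies X Y φ).Countable :=
  factorDecompEntropies_countable_of_sofic_general X Y φ hX
end

section
/- Let A be a finite alphabet, let n ≥ 4 be an integer, and let x ∈ A^ℤ. Suppose that for every i ∈ ℤ there exists an integer t with 1 ≤ t ≤ n/4 such that x_{j+t} = x_j for all j with i ≤ j ≤ i + n − 1 − t (that is, every length-n window of x overlaps itself after a shift of at most n/4 symbols). Then x is periodic: there exists an integer p ≥ 1 with x_{j+p} = x_j for all j ∈ ℤ. -/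
/-!
Let `μ i` be the least period `t ≤ n / 4` of the length-`n` block of `x` at `i`. The blocks
at `i` and `i + 1` share a block of length `n - 1 ≥ μ i + μ (i + 1)`, which by the Fine–Wilf
periodicity lemma has period `g = gcd (μ i) (μ (i + 1))`. As `g` divides both periods, it
extends to both blocks, so minimality forces `μ i = g = μ (i + 1)`. Hence `μ` is constant, and
its value is a period of `x`.
-/

open Set Function Filter Topology

namespace List

variable {α : Type*} {u : List α} {a b : α} {g p q : ℕ}

theorem HasPeriod.getElem?_add_mul (h : u.HasPeriod g) {i k : ℕ} (hi : i + k * g < u.length) :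
    u[i + k * g]? = u[i]? := by
  rw [← h.getElem?_mod g _ u hi, Nat.add_mul_mod_self_right, h.getElem?_mod g i u (by omega)]

theorem HasPeriod.cons_of_dvd (hp : (a :: u).HasPeriod p) (hg : u.HasPeriod g) (hgp : g ∣ p)
    (hp0 : 0 < p) (hpu : p ≤ u.length) : (a :: u).HasPeriod g := by
  obtain ⟨k, rfl⟩ := hgp
  obtain ⟨k, rfl⟩ : ∃ k', k = k' + 1 := ⟨k - 1, by cases k <;> simp_all⟩
  have hg0 : 0 < g := Nat.pos_of_mul_pos_right hp0
  rw [show g * (k + 1) = k * g + g by ring] at hp hpu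
  rw [hasPeriod_iff_getElem?] at hp ⊢
  rintro (_ | i) hi
  · calc (a :: u)[0]? = (a :: u)[(g - 1 + k * g) + 1]? := by
          rw [hp 0 (by simp; omega)]; congr 1; omega
      _ = (a :: u)[0 + g]? := by
          rw [getElem?_cons_succ, hg.getElem?_add_mul (by omega), zero_add,
            ← getElem?_cons_succ (a := a), Nat.sub_add_cancel hg0]
  · rw [getElem?_cons_succ, show i + 1 + g = (i + g) + 1 by omega, getElem?_cons_succ]
    exact (hasPeriod_iff_getElem?.1 hg) i (by simp at hi; omega)

theorem HasPeriod.concat_of_dvd (hq : (u ++ [b]).HasPeriod q) (hg : u.HasPeriod g) (hgq : g ∣ q)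
    (hq0 : 0 < q) (hqu : q ≤ u.length) : (u ++ [b]).HasPeriod g := by
  obtain ⟨k, rfl⟩ := hgq
  obtain ⟨k, rfl⟩ : ∃ k', k = k' + 1 := ⟨k - 1, by cases k <;> simp_all⟩
  have hg0 : 0 < g := Nat.pos_of_mul_pos_right hq0
  rw [show g * (k + 1) = k * g + g by ring] at hq hqu
  rw [hasPeriod_iff_getElem?] at hq ⊢
  intro i hi
  simp only [length_append, length_singleton] at hi
  rw [getElem?_append_left (by omega)]
  rcases Nat.lt_or_ge (i + g) u.length with hin | hend
  · rw [getElem?_append_left hin]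
    exact (hasPeriod_iff_getElem?.1 hg) i (by omega)
  · obtain rfl : i = (u.length - (k * g + g)) + k * g := by omega
    rw [hg.getElem?_add_mul (by omega), ← getElem?_append_left (l₂ := [b]) (by omega),
      hq _ (by simp; omega)]
    congr 1
    omega

theorem HasPeriod.gcd_of_cons_of_concat (hp : (a :: u).HasPeriod p) (hq : (u ++ [b]).HasPeriod q)
    (hp0 : 0 < p) (hq0 : 0 < q) (len : p + q - p.gcd q ≤ u.length) :
    (a :: u).HasPeriod (p.gcd q) ∧ (u ++ [b]).HasPeriod (p.gcd q) := by
  have hu : u.HasPeriod (p.gcd q) :=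
    (hp.infix (suffix_cons a u).isInfix).gcd (hq.infix (prefix_append u [b]).isInfix) len
  have := Nat.gcd_le_left q hp0
  have := Nat.gcd_le_right (n := q) p hq0
  exact ⟨hp.cons_of_dvd hu (Nat.gcd_dvd_left p q) hp0 (by omega),
    hq.concat_of_dvd hu (Nat.gcd_dvd_right p q) hq0 (by omega)⟩

end List

theorem exists_pos_forall_of_gcd_of_succ {P : ℤ → ℕ → Prop}
    (hP : ∀ i, ∃ p, 0 < p ∧ P i p)
    (hgcd : ∀ i p q, P i p → P (i + 1) q → 0 < p → 0 < q →
      P i (p.gcd q) ∧ P (i + 1) (p.gcd q)) :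
    ∃ p, 0 < p ∧ ∀ i, P i p := by
  classical
  let μ i := Nat.find (hP i)
  have hμ : ∀ i, 0 < μ i ∧ P i (μ i) := fun i => Nat.find_spec (hP i)
  have hμ_periodic : Periodic μ 1 := by
    intro i
    obtain ⟨hp0, hp⟩ := hμ i
    obtain ⟨hq0, hq⟩ := hμ (i + 1)
    obtain ⟨hgp, hgq⟩ := hgcd i _ _ hp hq hp0 hq0
    have hg0 := Nat.gcd_pos_of_pos_left (μ (i + 1)) hp0
    have : μ i ≤ _ := Nat.find_min' (hP i) ⟨hg0, hgp⟩
    have : μ (i + 1) ≤ _ := Nat.find_min' (hP (i + 1)) ⟨hg0, hgq⟩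
    have := Nat.gcd_le_left (μ (i + 1)) hp0
    have := Nat.gcd_le_right (n := μ (i + 1)) (μ i) hq0
    omega
  refine ⟨μ 0, (hμ 0).1, fun i => ?_⟩
  have hμi : μ i = μ 0 := by simpa using hμ_periodic.int_mul_eq i
  exact hμi ▸ (hμ i).2

def block {A : Type*} (x : ℤ → A) (i : ℤ) (n : ℕ) : List A :=
  List.ofFn fun k : Fin n => x (i + k)

section block

variable {A : Type*} {x : ℤ → A} {i : ℤ} {n p q t : ℕ}

theorem block_succ : block x i (n + 1) = x i :: block x (i + 1) n := by
  simp only [block, List.ofFn_succ, Fin.val_zero, Fin.val_succ, Nat.cast_zero, add_zero,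
    Nat.cast_succ, add_assoc, add_comm (1 : ℤ)]

theorem block_succ' : block x i (n + 1) = block x i n ++ [x (i + n)] := by
  simp only [block, List.ofFn_succ', List.concat_eq_append, Fin.val_castSucc, Fin.val_last]

theorem block_hasPeriod_iff : (block x i n).HasPeriod t ↔
    ∀ j : ℤ, i ≤ j → j + t < i + n → x (j + t) = x j := by
  simp only [List.hasPeriod_iff_getElem?, block, List.length_ofFn, List.getElem?_ofFn]
  constructor
  · intro h j hij hjn
    have := h (j - i).toNat (by omega)
    rw [dif_pos (by omega), dif_pos (by omega), Option.some_inj] at this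
    convert this.symm using 2 <;> push_cast <;> omega
  · intro h k hk
    rw [dif_pos (by omega), dif_pos (by omega), Option.some_inj, Nat.cast_add, ← add_assoc]
    exact (h (i + k) (by omega) (by omega)).symm

theorem block_hasPeriod_gcd (hp : (block x i (n + 1)).HasPeriod p)
    (hq : (block x (i + 1) (n + 1)).HasPeriod q) (hp0 : 0 < p) (hq0 : 0 < q)
    (len : p + q - p.gcd q ≤ n) :
    (block x i (n + 1)).HasPeriod (p.gcd q) ∧ (block x (i + 1) (n + 1)).HasPeriod (p.gcd q) := by
  rw [block_succ] at hp ⊢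
  rw [block_succ'] at hq ⊢
  exact hp.gcd_of_cons_of_concat hq hp0 hq0 (by rwa [block, List.length_ofFn])

end block

theorem periodic_of_small_self_overlap_general {A : Type*}
    (n : ℕ) (x : ℤ → A)
    (hov : ∀ i : ℤ, ∃ t : ℤ, 1 ≤ t ∧ 4 * t ≤ (n : ℤ) ∧
      ∀ j : ℤ, i ≤ j → j ≤ i + (n : ℤ) - 1 - t → x (j + t) = x j) :
    ∃ p : ℤ, 1 ≤ p ∧ ∀ j : ℤ, x (j + p) = x j := by
  have hblock : ∀ i, ∃ t, 0 < t ∧ 4 * t ≤ n ∧ (block x i n).HasPeriod t := by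
    intro i
    obtain ⟨t, ht1, ht4, ht⟩ := hov i
    lift t to ℕ using (by omega)
    exact ⟨t, by omega, by omega, block_hasPeriod_iff.2 fun j hij hjn => ht j hij (by omega)⟩
  obtain ⟨p, hp0, hp⟩ := exists_pos_forall_of_gcd_of_succ hblock <| by
    rintro i p q ⟨hp4, hp⟩ ⟨hq4, hq⟩ hp0 hq0
    obtain ⟨m, rfl⟩ : ∃ m, n = m + 1 := ⟨n - 1, by omega⟩
    have := Nat.gcd_le_left q hp0
    obtain ⟨hgp, hgq⟩ := block_hasPeriod_gcd hp hq hp0 hq0 (by omega)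
    exact ⟨⟨by omega, hgp⟩, ⟨by omega, hgq⟩⟩
  refine ⟨p, by omega, fun j => ?_⟩
  obtain ⟨hp4, hpj⟩ := hp j
  exact block_hasPeriod_iff.1 hpj j le_rfl (by omega)

/-- If every length-`n` window of `x ∈ A^ℤ` (with `n ≥ 4`)
overlaps itself after a shift of at most `n/4` symbols, then `x` is periodic. -/
theorem periodic_of_small_self_overlap {A : Type*} [Fintype A]
    (n : ℕ) (hn : 4 ≤ n) (x : ℤ → A)
    (hov : ∀ i : ℤ, ∃ t : ℤ, 1 ≤ t ∧ 4 * t ≤ (n : ℤ) ∧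
      ∀ j : ℤ, i ≤ j → j ≤ i + (n : ℤ) - 1 - t → x (j + t) = x j) :
    ∃ p : ℤ, 1 ≤ p ∧ ∀ j : ℤ, x (j + p) = x j :=
  periodic_of_small_self_overlap_general n x hov
end
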